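/- arXiv:2010.03906 — 4 statements merged into one kernel-verified Lean document; each statement's English description precedes it below -/
import Mathlib

section
/- For any two m-dimensional linear subspaces F, G of ℝ^n, the operator norms satisfy ‖Π_F − Π_G‖ = ‖Π_{F⊥} − Π_{G⊥}‖ = ‖Π_{F⊥} ∘ Π_G‖ = ‖Π_F ∘ Π_{G⊥}‖ = ‖Π_{G⊥} ∘ Π_F‖ = ‖Π_G ∘ Π_{F⊥}‖, where Π_V denotes orthogonal projection onto the subspace V. -/
/-!
Write `P_V` for the orthogonal projection onto `V`. Since
`(P_F - P_G) x = P_F P_{G⊥} x - P_{F⊥} P_G x` with summands in `F` and `F⊥`,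
`‖P_F - P_G‖ = max ‖P_F P_{G⊥}‖ ‖P_{F⊥} P_G‖`, and taking adjoints `‖P_F P_{G⊥}‖ = ‖P_{G⊥} P_F‖`.
Everything therefore reduces to `‖P_{G⊥} P_F‖ ≤ b := ‖P_{F⊥} P_G‖` when `dim F = dim G`.
If `b < 1`, then `P_F` is injective on `G`, hence maps `G` onto `F` by counting dimensions.
Writing `f ∈ F` as `P_F g` with `g ∈ G`, the estimate `‖f‖² = ⟪f, g⟫ = ⟪P_G f, g⟫ ≤ ‖P_G f‖ ‖g‖`
yields `‖P_{G⊥} f‖ ‖g‖ ≤ ‖f‖ ‖P_{F⊥} g‖ ≤ b ‖f‖ ‖g‖`.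
-/

open Metric Real Filter

noncomputable def pr {n : ℕ} (F : Submodule ℝ (EuclideanSpace ℝ (Fin n))) :
    EuclideanSpace ℝ (Fin n) →L[ℝ] EuclideanSpace ℝ (Fin n) :=
  F.subtypeL.comp (Submodule.orthogonalProjection F)

noncomputable def graphSet {n : ℕ} (F : Submodule ℝ (EuclideanSpace ℝ (Fin n)))
    (u : F → Fᗮ) : Set (EuclideanSpace ℝ (Fin n)) :=
  Set.range fun z : F => (z : EuclideanSpace ℝ (Fin n)) + (u z : EuclideanSpace ℝ (Fin n))

noncomputable def cone {n : ℕ} (x : EuclideanSpace ℝ (Fin n)) (β : ℝ)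
    (F : Submodule ℝ (EuclideanSpace ℝ (Fin n))) : Set (EuclideanSpace ℝ (Fin n)) :=
  {z | ‖pr Fᗮ (z - x)‖ ≤ β * ‖pr F (z - x)‖}

open scoped RealInnerProductSpace

namespace Submodule

variable {E : Type*} [NormedAddCommGroup E] [InnerProductSpace ℝ E] (F G : Submodule ℝ E)
  [F.HasOrthogonalProjection]

lemma exists_mem_starProjection_eq_of_disjoint [FiniteDimensional ℝ F] [FiniteDimensional ℝ G]
    (hdim : Module.finrank ℝ F = Module.finrank ℝ G) (hdisj : Disjoint G Fᗮ) {f : E}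
    (hf : f ∈ F) : ∃ g ∈ G, F.starProjection g = f := by
  let A : G →ₗ[ℝ] F := (F.orthogonalProjectionOnto : E →ₗ[ℝ] F) ∘ₗ G.subtype
  have hA : Function.Injective A := by
    refine (injective_iff_map_eq_zero A).mpr fun g hg ↦ ?_
    have hgF : (g : E) ∈ Fᗮ := by simpa [A] using hg
    simpa using disjoint_def.mp hdisj g g.2 hgF
  obtain ⟨g, hg⟩ :=
    (LinearMap.injective_iff_surjective_of_finrank_eq_finrank hdim.symm).mp hA ⟨f, hf⟩
  exact ⟨g, g.2, congrArg Subtype.val hg⟩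

variable [G.HasOrthogonalProjection]

lemma norm_starProjection_comp_comm [CompleteSpace E] :
    ‖F.starProjection ∘L G.starProjection‖ = ‖G.starProjection ∘L F.starProjection‖ := by
  rw [← LinearIsometryEquiv.norm_map ContinuousLinearMap.adjoint, ContinuousLinearMap.adjoint_comp,
    (isSelfAdjoint_starProjection F).adjoint_eq, (isSelfAdjoint_starProjection G).adjoint_eq]

lemma norm_orthogonal_starProjection_sub :
    ‖Fᗮ.starProjection - Gᗮ.starProjection‖ = ‖F.starProjection - G.starProjection‖ := by
  rw [starProjection_orthogonal, starProjection_orthogonal, ← norm_neg]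
  congr 1
  abel

lemma norm_sq_starProjection_sub_apply (x : E) :
    ‖(F.starProjection - G.starProjection) x‖ ^ 2 =
      ‖F.starProjection (Gᗮ.starProjection x)‖ ^ 2 +
        ‖Fᗮ.starProjection (G.starProjection x)‖ ^ 2 := by
  have hsplit : (F.starProjection - G.starProjection) x =
      F.starProjection (Gᗮ.starProjection x) - Fᗮ.starProjection (G.starProjection x) := by
    simp only [starProjection_orthogonal_val, map_sub, sub_apply]
    abel
  have horth :
      ⟪F.starProjection (Gᗮ.starProjection x), Fᗮ.starProjection (G.starProjection x)⟫ = 0 :=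
    F.inner_right_of_mem_orthogonal (F.starProjection_apply_mem _) (Fᗮ.starProjection_apply_mem _)
  rw [hsplit, norm_sub_sq_real, horth]
  ring

lemma norm_apply_starProjection_le {E' : Type*} [NormedAddCommGroup E'] [NormedSpace ℝ E']
    (T : E →L[ℝ] E') (x : E) :
    ‖T (G.starProjection x)‖ ≤ ‖T ∘L G.starProjection‖ * ‖G.starProjection x‖ := by
  simpa [starProjection_eq_self_iff.mpr (G.starProjection_apply_mem x)] using
    (T ∘L G.starProjection).le_opNorm (G.starProjection x)

lemma norm_starProjection_sub_eq_max :
    ‖F.starProjection - G.starProjection‖ =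
      max ‖F.starProjection ∘L Gᗮ.starProjection‖ ‖Fᗮ.starProjection ∘L G.starProjection‖ := by
  set a := ‖F.starProjection ∘L Gᗮ.starProjection‖
  set b := ‖Fᗮ.starProjection ∘L G.starProjection‖
  refine le_antisymm (ContinuousLinearMap.opNorm_le_bound _ (by positivity) fun x ↦ ?_) ?_
  · have ha : ‖F.starProjection (Gᗮ.starProjection x)‖ ≤ max a b * ‖Gᗮ.starProjection x‖ :=
      (Gᗮ.norm_apply_starProjection_le _ x).trans (by gcongr; exact le_max_left a b)
    have hb : ‖Fᗮ.starProjection (G.starProjection x)‖ ≤ max a b * ‖G.starProjection x‖ :=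
      (G.norm_apply_starProjection_le _ x).trans (by gcongr; exact le_max_right a b)
    rw [← sq_le_sq₀ (norm_nonneg _) (by positivity), norm_sq_starProjection_sub_apply, mul_pow,
      G.norm_sq_eq_add_norm_sq_starProjection x]
    nlinarith [pow_le_pow_left₀ (norm_nonneg _) ha 2, pow_le_pow_left₀ (norm_nonneg _) hb 2]
  · have hsq := norm_sq_starProjection_sub_apply F G
    have hA (x : E) :
        ‖F.starProjection (Gᗮ.starProjection x)‖ ≤ ‖(F.starProjection - G.starProjection) x‖ := by
      rw [← sq_le_sq₀ (norm_nonneg _) (norm_nonneg _), hsq]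
      exact le_add_of_nonneg_right (sq_nonneg _)
    have hB (x : E) :
        ‖Fᗮ.starProjection (G.starProjection x)‖ ≤ ‖(F.starProjection - G.starProjection) x‖ := by
      rw [← sq_le_sq₀ (norm_nonneg _) (norm_nonneg _), hsq]
      exact le_add_of_nonneg_left (sq_nonneg _)
    exact max_le
      (ContinuousLinearMap.opNorm_le_bound _ (norm_nonneg _) fun x ↦
        (hA x).trans (ContinuousLinearMap.le_opNorm _ x))
      (ContinuousLinearMap.opNorm_le_bound _ (norm_nonneg _) fun x ↦
        (hB x).trans (ContinuousLinearMap.le_opNorm _ x))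

lemma norm_orthogonal_starProjection_mul_norm_le {g : E} (hg : g ∈ G) :
    ‖Gᗮ.starProjection (F.starProjection g)‖ * ‖g‖ ≤
      ‖F.starProjection g‖ * ‖Fᗮ.starProjection g‖ := by
  set f := F.starProjection g
  have hfg : ⟪f, g⟫ = ‖f‖ ^ 2 := by simpa using F.re_inner_starProjection_eq_normSq g
  have hGf : ‖f‖ ^ 2 ≤ ‖G.starProjection f‖ * ‖g‖ :=
    calc ‖f‖ ^ 2 = ⟪G.starProjection f, g⟫ := by
          rw [G.inner_starProjection_left_eq_right, starProjection_eq_self_iff.mpr hg, hfg]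
      _ ≤ ‖G.starProjection f‖ * ‖g‖ := real_inner_le_norm _ _
  have hf := G.norm_sq_eq_add_norm_sq_starProjection f
  have hg' := F.norm_sq_eq_add_norm_sq_starProjection g
  rw [← sq_le_sq₀ (by positivity) (by positivity)]
  nlinarith [pow_le_pow_left₀ (by positivity) hGf 2]

lemma disjoint_orthogonal_of_norm_starProjection_comp_lt_one
    (h : ‖Fᗮ.starProjection ∘L G.starProjection‖ < 1) : Disjoint G Fᗮ := by
  refine disjoint_def.mpr fun x hxG hxF ↦ norm_le_zero_iff.mp ?_
  have hx : ‖x‖ ≤ ‖Fᗮ.starProjection ∘L G.starProjection‖ * ‖x‖ := by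
    simpa [starProjection_eq_self_iff.mpr hxG, starProjection_eq_self_iff.mpr hxF] using
      (Fᗮ.starProjection ∘L G.starProjection).le_opNorm x
  nlinarith [norm_nonneg x]

lemma norm_starProjection_orthogonal_comp_le [FiniteDimensional ℝ F] [FiniteDimensional ℝ G]
    (hdim : Module.finrank ℝ F = Module.finrank ℝ G) :
    ‖Gᗮ.starProjection ∘L F.starProjection‖ ≤ ‖Fᗮ.starProjection ∘L G.starProjection‖ := by
  set b := ‖Fᗮ.starProjection ∘L G.starProjection‖
  rcases le_or_gt 1 b with hb | hb
  · calc ‖Gᗮ.starProjection ∘L F.starProjection‖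
        ≤ ‖Gᗮ.starProjection‖ * ‖F.starProjection‖ := ContinuousLinearMap.opNorm_comp_le _ _
      _ ≤ 1 * 1 := by gcongr <;> exact starProjection_norm_le _
      _ ≤ b := by linarith
  refine ContinuousLinearMap.opNorm_le_bound _ (norm_nonneg _) fun x ↦ ?_
  obtain ⟨g, hg, hgf⟩ := exists_mem_starProjection_eq_of_disjoint F G hdim
    (disjoint_orthogonal_of_norm_starProjection_comp_lt_one F G hb) (F.starProjection_apply_mem x)
  have hFg : ‖Fᗮ.starProjection g‖ ≤ b * ‖g‖ := by
    simpa [starProjection_eq_self_iff.mpr hg] using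
      (Fᗮ.starProjection ∘L G.starProjection).le_opNorm g
  have hcomp := norm_orthogonal_starProjection_mul_norm_le F G hg
  rw [hgf] at hcomp
  have hbound : ‖Gᗮ.starProjection (F.starProjection x)‖ ≤ b * ‖F.starProjection x‖ := by
    rcases eq_or_ne g 0 with rfl | hg0
    · simp [← hgf]
    · refine le_of_mul_le_mul_right ?_ (norm_pos_iff.mpr hg0)
      calc _ ≤ ‖F.starProjection x‖ * ‖Fᗮ.starProjection g‖ := hcomp
        _ ≤ ‖F.starProjection x‖ * (b * ‖g‖) := by gcongr
        _ = b * ‖F.starProjection x‖ * ‖g‖ := by ring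
  calc ‖(Gᗮ.starProjection ∘L F.starProjection) x‖
      = ‖Gᗮ.starProjection (F.starProjection x)‖ := rfl
    _ ≤ b * ‖F.starProjection x‖ := hbound
    _ ≤ b * ‖x‖ := by gcongr; exact F.norm_starProjection_apply_le x

lemma norm_starProjection_orthogonal_comp_eq [FiniteDimensional ℝ F] [FiniteDimensional ℝ G]
    (hdim : Module.finrank ℝ F = Module.finrank ℝ G) :
    ‖Gᗮ.starProjection ∘L F.starProjection‖ = ‖Fᗮ.starProjection ∘L G.starProjection‖ :=
  (norm_starProjection_orthogonal_comp_le F G hdim).antisymm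
    (norm_starProjection_orthogonal_comp_le G F hdim.symm)

end Submodule

lemma pr_eq_starProjection {n : ℕ} (F : Submodule ℝ (EuclideanSpace ℝ (Fin n))) :
    pr F = F.starProjection := rfl

theorem projection_norm_identities_general {n m : ℕ}
    (F G : Submodule ℝ (EuclideanSpace ℝ (Fin n)))
    (hF : Module.finrank ℝ F = m) (hG : Module.finrank ℝ G = m) :
    ‖pr F - pr G‖ = ‖pr Fᗮ - pr Gᗮ‖ ∧
    ‖pr F - pr G‖ = ‖(pr Fᗮ).comp (pr G)‖ ∧
    ‖pr F - pr G‖ = ‖(pr F).comp (pr Gᗮ)‖ ∧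
    ‖pr F - pr G‖ = ‖(pr Gᗮ).comp (pr F)‖ ∧
    ‖pr F - pr G‖ = ‖(pr G).comp (pr Fᗮ)‖ := by
  simp only [pr_eq_starProjection]
  have hFG := F.norm_starProjection_orthogonal_comp_eq G (hF.trans hG.symm)
  have hGF := F.norm_starProjection_comp_comm Gᗮ
  have hdiff :
      ‖F.starProjection - G.starProjection‖ = ‖Fᗮ.starProjection ∘L G.starProjection‖ := by
    rw [F.norm_starProjection_sub_eq_max G, hGF, hFG, max_self]
  refine ⟨(F.norm_orthogonal_starProjection_sub G).symm, hdiff, ?_, ?_, ?_⟩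
  · rw [hdiff, hGF, hFG]
  · rw [hdiff, hFG]
  · rw [hdiff, Fᗮ.norm_starProjection_comp_comm G]

/-- Lemma A.1 (Allard 8.9(3)): equalities of operator norms of projection
differences and compositions for two `m`-dimensional subspaces of `ℝⁿ`. -/
theorem projection_norm_identities {n m : ℕ} (hm : 1 ≤ m) (hmn : m ≤ n)
    (F G : Submodule ℝ (EuclideanSpace ℝ (Fin n)))
    (hF : Module.finrank ℝ F = m) (hG : Module.finrank ℝ G = m) :
    ‖pr F - pr G‖ = ‖pr Fᗮ - pr Gᗮ‖ ∧
    ‖pr F - pr G‖ = ‖(pr Fᗮ).comp (pr G)‖ ∧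
    ‖pr F - pr G‖ = ‖(pr F).comp (pr Gᗮ)‖ ∧
    ‖pr F - pr G‖ = ‖(pr Gᗮ).comp (pr F)‖ ∧
    ‖pr F - pr G‖ = ‖(pr G).comp (pr Fᗮ)‖ :=
  projection_norm_identities_general F G hF hG
end

section
/- For θ ∈ [0, π/2], m ≥ 1 a natural number, and τ ∈ [0,1), the inequality (1 − cos θ)^m ≤ (sin θ)^{(1+τ)m} holds. -/
open Real

/-- For `θ ∈ [0,π/2]`, `m ≥ 1`, `τ ∈ [0,1)`: `(1-cos θ)^m ≤ (sin θ)^((1+τ)m)`. -/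
theorem one_sub_cos_pow_le_sin_rpow (θ : ℝ) (hθ : θ ∈ Set.Icc 0 (π / 2))
    (m : ℕ) (hm : 1 ≤ m) (τ : ℝ) (hτ : τ ∈ Set.Ico (0 : ℝ) 1) :
    (1 - Real.cos θ) ^ m ≤ Real.sin θ ^ ((1 + τ) * m) := by
  obtain ⟨h0, h1⟩ := hθ
  obtain ⟨hτ0, hτ1⟩ := hτ
  have hc : 0 ≤ Real.cos θ := Real.cos_nonneg_of_mem_Icc ⟨by linarith [Real.pi_pos], h1⟩
  have hs : 0 ≤ Real.sin θ := Real.sin_nonneg_of_nonneg_of_le_pi h0 (by linarith [Real.pi_pos])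
  have hs1 : Real.sin θ ≤ 1 := Real.sin_le_one θ
  have hpyth := Real.sin_sq_add_cos_sq θ
  have key : 1 - Real.cos θ ≤ Real.sin θ ^ 2 := by nlinarith
  rcases eq_or_lt_of_le hs with hz | hz
  · have hcos : Real.cos θ = 1 := by nlinarith
    rw [← hz, hcos]
    simp only [sub_self]
    rw [Real.zero_rpow (by positivity), zero_pow (by omega)]
  · have h2 : (1 - Real.cos θ) ^ m ≤ (Real.sin θ ^ 2) ^ m :=
      pow_le_pow_left₀ (by nlinarith) key m
    have h3 : (Real.sin θ ^ 2) ^ m = Real.sin θ ^ ((2 * m : ℕ) : ℝ) := by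
      rw [Real.rpow_natCast, ← pow_mul]
    have h4 : Real.sin θ ^ ((2 * m : ℕ) : ℝ) ≤ Real.sin θ ^ ((1 + τ) * m) := by
      apply Real.rpow_le_rpow_of_exponent_ge hz hs1
      push_cast
      have : (1:ℝ) ≤ (m:ℝ) := by exact_mod_cast hm
      nlinarith
    calc (1 - Real.cos θ) ^ m ≤ (Real.sin θ ^ 2) ^ m := h2
      _ = Real.sin θ ^ ((2 * m : ℕ) : ℝ) := h3
      _ ≤ Real.sin θ ^ ((1 + τ) * m) := h4
end

section
/- For θ ∈ (0, π/2], m ≥ 1 a natural number, and τ ∈ (1, ∞), the inequality c(τ,m) · (sin θ)^{(1+τ)m} ≤ (1 − cos θ)^m holds, where c(τ,m) := min{1, [(1 − 1/τ)(1 − 1/τ²)^{−(1+τ)/2}]^m} > 0. -/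
open Real

lemma aux_key (c τ : ℝ) (hc0 : 0 ≤ c) (hc1 : c < 1) (hτ : 1 < τ) :
    min 1 ((1 - 1 / τ) * (1 - 1 / τ ^ 2) ^ (-(1 + τ) / 2)) *
      ((1 - c) ^ ((τ - 1) / 2) * (1 + c) ^ ((τ + 1) / 2)) ≤ 1 := by
  have hτ0 : 0 < τ := by linarith
  set a : ℝ := 1 - 1 / τ with ha_def
  set b : ℝ := 1 + 1 / τ with hb_def
  have ha : 0 < a := by
    have : 1 / τ < 1 := by rw [div_lt_one hτ0]; exact hτ
    simp only [ha_def]; linarith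
  have hb : 0 < b := by
    have : 0 < 1 / τ := by positivity
    simp only [hb_def]; linarith
  have hab : 1 - 1 / τ ^ 2 = a * b := by
    simp only [ha_def, hb_def]; field_simp; ring
  -- AM-GM
  have hw : (τ - 1) / (2 * τ) + (τ + 1) / (2 * τ) = 1 := by field_simp; ring
  have hτ1 : τ - 1 ≠ 0 := by linarith
  have amgm := Real.geom_mean_le_arith_mean2_weighted
    (by apply div_nonneg <;> linarith : (0:ℝ) ≤ (τ - 1) / (2 * τ))
    (by apply div_nonneg <;> linarith : (0:ℝ) ≤ (τ + 1) / (2 * τ))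
    (by apply div_nonneg <;> linarith : (0:ℝ) ≤ (1 - c) / a)
    (by apply div_nonneg <;> linarith : (0:ℝ) ≤ (1 + c) / b) hw
  have h1 : (τ - 1) / (2 * τ) * ((1 - c) / a) = (1 - c) / 2 := by
    rw [ha_def]; field_simp
  have h2 : (τ + 1) / (2 * τ) * ((1 + c) / b) = (1 + c) / 2 := by
    rw [hb_def]; field_simp
  rw [h1, h2, show (1 - c) / 2 + (1 + c) / 2 = 1 by ring] at amgm
  -- raise to power τ
  have hd1 : (0:ℝ) ≤ (1 - c) / a := div_nonneg (by linarith) ha.le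
  have hd2 : (0:ℝ) ≤ (1 + c) / b := div_nonneg (by linarith) hb.le
  have h0 : (0:ℝ) ≤ ((1 - c) / a) ^ ((τ - 1) / (2 * τ)) * ((1 + c) / b) ^ ((τ + 1) / (2 * τ)) :=
    mul_nonneg (Real.rpow_nonneg hd1 _) (Real.rpow_nonneg hd2 _)
  have hpow : (((1 - c) / a) ^ ((τ - 1) / (2 * τ)) * ((1 + c) / b) ^ ((τ + 1) / (2 * τ))) ^ τ
      ≤ 1 := by
    have := Real.rpow_le_rpow h0 amgm hτ0.le
    simpa using this
  have hc1' : (0:ℝ) ≤ 1 - c := by linarith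
  have hc2' : (0:ℝ) ≤ 1 + c := by linarith
  rw [Real.mul_rpow (Real.rpow_nonneg hd1 _) (Real.rpow_nonneg hd2 _),
    ← Real.rpow_mul hd1, ← Real.rpow_mul hd2] at hpow
  have he1 : (τ - 1) / (2 * τ) * τ = (τ - 1) / 2 := by field_simp
  have he2 : (τ + 1) / (2 * τ) * τ = (τ + 1) / 2 := by field_simp
  rw [he1, he2, Real.div_rpow (by linarith) ha.le, Real.div_rpow (by linarith) hb.le,
    div_mul_div_comm, div_le_one (by positivity)] at hpow
  -- hpow : (1-c)^((τ-1)/2) * (1+c)^((τ+1)/2) ≤ a^((τ-1)/2) * b^((τ+1)/2)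
  set A : ℝ := a * (1 - 1 / τ ^ 2) ^ (-(1 + τ) / 2) with hA_def
  set H : ℝ := a ^ ((τ - 1) / 2) * b ^ ((τ + 1) / 2) with hH_def
  have hApos : 0 < A := by rw [hA_def, hab]; positivity
  have hHpos : 0 < H := by rw [hH_def]; positivity
  have hAH : A * H = 1 := by
    rw [hA_def, hH_def, hab, Real.mul_rpow ha.le hb.le]
    have : a * (a ^ (-(1 + τ) / 2) * b ^ (-(1 + τ) / 2)) *
        (a ^ ((τ - 1) / 2) * b ^ ((τ + 1) / 2)) =
        a ^ (1 + -(1 + τ) / 2 + (τ - 1) / 2) * b ^ (-(1 + τ) / 2 + (τ + 1) / 2) := by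
      rw [Real.rpow_add ha, Real.rpow_add ha, Real.rpow_add hb, Real.rpow_one]; ring
    rw [this, show (1:ℝ) + -(1 + τ) / 2 + (τ - 1) / 2 = 0 by ring,
      show -(1 + τ) / 2 + (τ + 1) / 2 = 0 by ring, Real.rpow_zero, Real.rpow_zero, mul_one]
  calc min 1 A * ((1 - c) ^ ((τ - 1) / 2) * (1 + c) ^ ((τ + 1) / 2))
      ≤ min 1 A * H := by
        apply mul_le_mul_of_nonneg_left hpow (le_min zero_le_one hApos.le)
    _ ≤ 1 := by
        rcases le_total A 1 with h | h
        · rw [min_eq_right h, hAH]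
        · rw [min_eq_left h]
          rw [one_mul]
          nlinarith

lemma aux_single (c s τ : ℝ) (hs : 0 < s) (hc0 : 0 ≤ c) (hc1 : c < 1)
    (hpyth : s ^ 2 = 1 - c ^ 2) (hτ : 1 < τ) :
    min 1 ((1 - 1 / τ) * (1 - 1 / τ ^ 2) ^ (-(1 + τ) / 2)) * s ^ (1 + τ) ≤ 1 - c := by
  have h1c : (0:ℝ) < 1 - c := by linarith
  have h1c' : (0:ℝ) < 1 + c := by linarith
  have hs2 : s ^ (1 + τ) = s ^ 2 * s ^ (τ - 1) := by
    rw [← Real.rpow_natCast s 2, ← Real.rpow_add hs]; congr 1; push_cast; ring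
  have hsq : s ^ (τ - 1) = (1 - c) ^ ((τ - 1) / 2) * (1 + c) ^ ((τ - 1) / 2) := by
    have h : s ^ (τ - 1) = (s ^ (2:ℕ)) ^ ((τ - 1) / 2) := by
      rw [← Real.rpow_natCast s 2, ← Real.rpow_mul hs.le]; congr 1; push_cast; ring
    rw [h, hpyth, show (1:ℝ) - c ^ 2 = (1 - c) * (1 + c) by ring,
      Real.mul_rpow h1c.le h1c'.le]
  have h1ce : (1 + c) * (1 + c) ^ ((τ - 1) / 2) = (1 + c) ^ ((τ + 1) / 2) := by
    nth_rewrite 1 [← Real.rpow_one (1 + c)]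
    rw [← Real.rpow_add h1c']; ring_nf
  have key := aux_key c τ hc0 hc1 hτ
  rw [hs2, hpyth, show (1:ℝ) - c ^ 2 = (1 - c) * (1 + c) by ring, hsq]
  have hre : min 1 ((1 - 1 / τ) * (1 - 1 / τ ^ 2) ^ (-(1 + τ) / 2)) *
      ((1 - c) * (1 + c)) * ((1 - c) ^ ((τ - 1) / 2) * (1 + c) ^ ((τ - 1) / 2)) =
      min 1 ((1 - 1 / τ) * (1 - 1 / τ ^ 2) ^ (-(1 + τ) / 2)) *
        ((1 - c) ^ ((τ - 1) / 2) * ((1 + c) * (1 + c) ^ ((τ - 1) / 2))) * (1 - c) := by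
    ring
  rw [← mul_assoc, hre, h1ce]
  calc _ ≤ 1 * (1 - c) := mul_le_mul_of_nonneg_right key h1c.le
    _ = 1 - c := one_mul _


/-- For `θ ∈ (0,π/2]`, `m ≥ 1`, `τ > 1`:
`c(τ,m) (sin θ)^((1+τ)m) ≤ (1-cos θ)^m` with
`c(τ,m) = min {1, [(1-1/τ)(1-1/τ²)^{-(1+τ)/2}]^m} > 0`. -/
theorem c_sin_rpow_le_one_sub_cos_pow (θ : ℝ) (hθ : θ ∈ Set.Ioc 0 (π / 2))
    (m : ℕ) (hm : 1 ≤ m) (τ : ℝ) (hτ : 1 < τ) :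
    0 < min 1 (((1 - 1 / τ) * (1 - 1 / τ ^ 2) ^ (-(1 + τ) / 2)) ^ m) ∧
    min 1 (((1 - 1 / τ) * (1 - 1 / τ ^ 2) ^ (-(1 + τ) / 2)) ^ m) *
        Real.sin θ ^ ((1 + τ) * m) ≤ (1 - Real.cos θ) ^ m := by
  obtain ⟨hθ0, hθ2⟩ := hθ
  have hτ0 : (0:ℝ) < τ := by linarith
  have h1τ : (0:ℝ) < 1 - 1 / τ := by
    have : 1 / τ < 1 := by rw [div_lt_one hτ0]; exact hτ
    linarith
  have h2τ : (0:ℝ) < 1 - 1 / τ ^ 2 := by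
    have hττ : (1:ℝ) < τ ^ 2 := by nlinarith
    have : 1 / τ ^ 2 < 1 := by rw [div_lt_one (by positivity)]; exact hττ
    linarith
  set A : ℝ := (1 - 1 / τ) * (1 - 1 / τ ^ 2) ^ (-(1 + τ) / 2) with hA_def
  have hA : 0 < A := mul_pos h1τ (Real.rpow_pos_of_pos h2τ _)
  refine ⟨lt_min one_pos (pow_pos hA m), ?_⟩
  -- trig facts
  have hs : 0 < Real.sin θ := Real.sin_pos_of_pos_of_lt_pi hθ0 (by linarith [Real.pi_pos])
  have hc0 : 0 ≤ Real.cos θ := Real.cos_nonneg_of_mem_Icc ⟨by linarith [Real.pi_pos], hθ2⟩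
  have hpyth : Real.sin θ ^ 2 = 1 - Real.cos θ ^ 2 := by
    have := Real.sin_sq_add_cos_sq θ; linarith
  have hc1 : Real.cos θ < 1 := by nlinarith
  have single := aux_single (Real.cos θ) (Real.sin θ) τ hs hc0 hc1 hpyth hτ
  have hmin : min 1 (A ^ m) = (min 1 A) ^ m := by
    rcases le_total A 1 with h | h
    · rw [min_eq_right (pow_le_one₀ hA.le h), min_eq_right h]
    · rw [min_eq_left (one_le_pow₀ h), min_eq_left h, one_pow]
  have hsm : Real.sin θ ^ ((1 + τ) * m) = (Real.sin θ ^ (1 + τ)) ^ m := by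
    rw [Real.rpow_mul hs.le, Real.rpow_natCast]
  rw [hmin, hsm, ← mul_pow]
  exact pow_le_pow_left₀ (mul_nonneg (le_min zero_le_one hA.le) (Real.rpow_nonneg hs.le _))
    single m
end

section
/- The function h_τ(θ) := (1 − cos θ)/(sin θ)^{1+τ}, defined for θ ∈ (0, π/2), is non-decreasing on (0, π/2) when τ ∈ [0,1]; moreover lim_{θ→π/2} h_τ(θ) = 1, and lim_{θ→0⁺} h_τ(θ) equals 0 if τ ∈ [0,1) and 1/2 if τ = 1. -/
/-!
With `θ = 2x`, the identities `1 - cos 2x = 2 sin² x` and `sin 2x = 2 sin x cos x` give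
`h_τ(2x) = 2^(-τ) sin x ^ (1 - τ) / cos x ^ (1 + τ)`. For `-1 ≤ τ ≤ 1` the numerator increases
and the denominator decreases on `(0, π/2)`, which gives monotonicity. The half-angle form is
continuous at `x = 0`, with value `2^(-τ) 0^(1 - τ)`: this is `0` for `τ < 1` and `1/2` for
`τ = 1`. At `π/2` the function itself is continuous, with value `1`.
-/

open Real Filter Topology Set

noncomputable def hTau (τ θ : ℝ) : ℝ := (1 - cos θ) / sin θ ^ (1 + τ)

lemma hTau_two_mul (τ : ℝ) {x : ℝ} (hs : 0 < sin x) (hc : 0 < cos x) :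
    hTau τ (2 * x) = 2 ^ (-τ) * sin x ^ (1 - τ) / cos x ^ (1 + τ) := by
  rw [hTau, cos_two_mul_eq_one_sub, sin_two_mul, mul_rpow (by positivity) hc.le,
    mul_rpow zero_le_two hs.le, show -τ = 1 - (1 + τ) by ring,
    show 1 - τ = 2 - (1 + τ) by ring, rpow_sub two_pos, rpow_sub hs, rpow_one, rpow_two]
  have : 0 < sin x ^ (1 + τ) := rpow_pos_of_pos hs _
  have : 0 < cos x ^ (1 + τ) := rpow_pos_of_pos hc _
  have : 0 < (2 : ℝ) ^ (1 + τ) := rpow_pos_of_pos two_pos _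
  field_simp
  ring

lemma hTau_eq_half_angle (τ : ℝ) {θ : ℝ} (h₀ : 0 < θ) (hπ : θ < π) :
    hTau τ θ = 2 ^ (-τ) * sin (θ / 2) ^ (1 - τ) / cos (θ / 2) ^ (1 + τ) := by
  have hs : 0 < sin (θ / 2) := sin_pos_of_pos_of_lt_pi (by linarith) (by linarith)
  have hc : 0 < cos (θ / 2) := cos_pos_of_mem_Ioo ⟨by linarith, by linarith⟩
  rw [← hTau_two_mul τ hs hc, mul_div_cancel₀ θ two_ne_zero]

section

variable {τ : ℝ}

lemma hTau_monotoneOn (h₁ : -1 ≤ τ) (h₂ : τ ≤ 1) : MonotoneOn (hTau τ) (Ioo 0 π) := by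
  rintro θ₁ ⟨h₀, -⟩ θ₂ ⟨-, hπ⟩ h₁₂
  rw [hTau_eq_half_angle τ h₀ (by linarith), hTau_eq_half_angle τ (by linarith) hπ]
  have hs : 0 < sin (θ₁ / 2) := sin_pos_of_pos_of_lt_pi (by linarith) (by linarith)
  have hc : 0 < cos (θ₂ / 2) := cos_pos_of_mem_Ioo ⟨by linarith, by linarith⟩
  have hs_le : sin (θ₁ / 2) ≤ sin (θ₂ / 2) :=
    sin_le_sin_of_le_of_le_pi_div_two (by linarith) (by linarith) (by linarith)
  have hc_le : cos (θ₂ / 2) ≤ cos (θ₁ / 2) :=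
    cos_le_cos_of_nonneg_of_le_pi (by linarith) (by linarith) (by linarith)
  have : 0 ≤ sin (θ₂ / 2) ^ (1 - τ) := rpow_nonneg (hs.trans_le hs_le).le _
  gcongr
  linarith

lemma tendsto_hTau_nhds_pi_div_two : Tendsto (hTau τ) (𝓝 (π / 2)) (𝓝 1) := by
  have hcont : ContinuousAt (hTau τ) (π / 2) :=
    (continuousAt_const.sub continuous_cos.continuousAt).div
      ((continuousAt_rpow_const _ _ (Or.inl (by simp))).comp continuous_sin.continuousAt)
      (by simp)
  simpa [hTau] using hcont.tendsto

lemma tendsto_hTau_nhdsGT_zero (hτ : τ ≤ 1) :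
    Tendsto (hTau τ) (𝓝[>] 0) (𝓝 (2 ^ (-τ) * 0 ^ (1 - τ))) := by
  set g : ℝ → ℝ := fun θ => 2 ^ (-τ) * sin (θ / 2) ^ (1 - τ) / cos (θ / 2) ^ (1 + τ)
  have hcont : ContinuousAt g 0 := by
    refine (continuousAt_const.mul ?_).div ?_ (by simp)
    · exact ((continuous_rpow_const (by linarith)).comp
        (continuous_sin.comp (continuous_id.div_const 2))).continuousAt
    · exact (continuousAt_rpow_const _ _ (Or.inl (by simp))).comp
        (continuous_cos.comp (continuous_id.div_const 2)).continuousAt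
  have hg : Tendsto g (𝓝[>] 0) (𝓝 (2 ^ (-τ) * 0 ^ (1 - τ))) := by
    simpa [g] using hcont.tendsto.mono_left nhdsWithin_le_nhds
  refine hg.congr' ?_
  filter_upwards [Ioo_mem_nhdsGT_of_mem ⟨le_refl 0, pi_pos⟩] with θ ⟨h₀, hπ⟩
  exact (hTau_eq_half_angle τ h₀ hπ).symm

end

/-- Properties of `h_τ(θ) = (1-cos θ)/(sin θ)^(1+τ)` on `(0,π/2)`:
monotonicity for `τ ∈ [0,1]`, limit `1` at `π/2`, and limit `0` (resp. `1/2`)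
at `0⁺` for `τ ∈ [0,1)` (resp. `τ = 1`). -/
theorem h_tau_properties (τ : ℝ) (hτ : 0 ≤ τ) :
    (τ ≤ 1 → ∀ θ₁ θ₂ : ℝ, 0 < θ₁ → θ₁ ≤ θ₂ → θ₂ < π / 2 →
      (1 - Real.cos θ₁) / Real.sin θ₁ ^ (1 + τ) ≤
        (1 - Real.cos θ₂) / Real.sin θ₂ ^ (1 + τ)) ∧
    Tendsto (fun θ : ℝ => (1 - Real.cos θ) / Real.sin θ ^ (1 + τ))
      (nhdsWithin (π / 2) (Set.Ioo 0 (π / 2))) (nhds 1) ∧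
    (τ < 1 → Tendsto (fun θ : ℝ => (1 - Real.cos θ) / Real.sin θ ^ (1 + τ))
      (nhdsWithin 0 (Set.Ioi 0)) (nhds 0)) ∧
    (τ = 1 → Tendsto (fun θ : ℝ => (1 - Real.cos θ) / Real.sin θ ^ (1 + τ))
      (nhdsWithin 0 (Set.Ioi 0)) (nhds (1 / 2))) := by
  refine ⟨fun hτ₁ θ₁ θ₂ h₀ h₁₂ h₂ => ?_, ?_, fun hτ₁ => ?_, fun hτ₁ => ?_⟩
  · have hπ : π / 2 < π := half_lt_self pi_pos
    exact hTau_monotoneOn (by linarith) hτ₁ ⟨h₀, by linarith⟩ ⟨by linarith, by linarith⟩ h₁₂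
  · exact tendsto_hTau_nhds_pi_div_two.mono_left nhdsWithin_le_nhds
  · have h := tendsto_hTau_nhdsGT_zero hτ₁.le
    rwa [zero_rpow (sub_ne_zero.2 hτ₁.ne'), mul_zero] at h
  · subst hτ₁
    have h := tendsto_hTau_nhdsGT_zero (τ := 1) le_rfl
    rwa [sub_self, rpow_zero, mul_one, rpow_neg_one, inv_eq_one_div] at h
end
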